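/- Lemma 2 (tubal-sampling cross-term bound). Let δ > 0, suppose m ≥ 4·(n₁B_∞/B)·log(1/δ), and define β := (1 + 2√(log(1/δ)))². Then with probability at least 1 − δ, ‖Σ_{k=1}^m A_{Ω(k)}ᴴ b_{Ω(k)}‖₂² ≤ β·(m·c²·n₂·μ/n₁²)·B. -/

import Mathlib

/-!
Put `v j = (A j)ᴴ b j`, viewed in `ℂ^(n₂n₃)` with the Euclidean norm, and `S = ∑ₖ v (Ω k)`.
Orthogonality `∑ (A j)ᴴ b j = 0` makes the summands centred, and the Frobenius bound gives
`‖v j‖² ≤ (c²n₂μ/n₁) ‖b j‖²`, hence `‖v j‖ ≤ R := √(c²n₂μ B_∞/n₁)` and mean square at most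
`V := c²n₂μB/n₁²`. The second moment gives `E‖S‖ ≤ √(mV)`. For the deviation above the mean,
reveal the samples one at a time: the Doob martingale `E[‖S‖ | Ω 1, …, Ω k]` moves by at most
`‖v (Ω k)‖` (triangle inequality), so `eˣ ≤ 1 + x + x²` on `|x| ≤ 1` bounds each conditional
moment generating function by `exp (θ²V)` as long as `2θR ≤ 1`. The Chernoff bound with
`θ = t/(2mV)` and `t = 2√(log (1/δ) · mV)` gives `P(‖S‖ ≥ √(mV) + t) ≤ δ`, where
`(√(mV) + t)² = β m V`; the sample-size condition on `m` is exactly `2θR ≤ 1`.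
-/

open Matrix Finset
open scoped BigOperators

theorem Real.exp_le_one_add_add_sq {x : ℝ} (hx : |x| ≤ 1) : Real.exp x ≤ 1 + x + x ^ 2 := by
  have h := (abs_le.mp (Real.exp_bound hx (n := 2) (by norm_num))).2
  norm_num [Finset.sum_range_succ, Nat.factorial, sq_abs] at h
  nlinarith [sq_nonneg x]

section Expectation

variable {ι : Type*} [Fintype ι]

theorem expect_fun_fin_succ {M : Type*} [AddCommMonoid M] [Module ℚ≥0 M] {m : ℕ}
    (f : (Fin (m + 1) → ι) → M) :
    𝔼 ω, f ω = 𝔼 a, 𝔼 ω : Fin m → ι, f (Fin.cons a ω) := by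
  rw [← Fintype.expect_equiv (Fin.consEquiv fun _ => ι) (fun p => f (Fin.cons p.1 p.2)) f
    (fun _ => rfl)]
  exact Finset.expect_product' univ univ fun a ω => f (Fin.cons a ω)

variable [Nonempty ι]

theorem expect_exp_le_exp_expect_sq {X : ι → ℝ} (hX : 𝔼 a, X a = 0) (hX1 : ∀ a, |X a| ≤ 1) :
    𝔼 a, Real.exp (X a) ≤ Real.exp (𝔼 a, X a ^ 2) := calc
  𝔼 a, Real.exp (X a) ≤ 𝔼 a, (1 + X a + X a ^ 2) :=
    expect_le_expect fun a _ => Real.exp_le_one_add_add_sq (hX1 a)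
  _ = 𝔼 a, X a ^ 2 + 1 := by
    rw [expect_add_distrib, expect_add_distrib, hX, Fintype.expect_const]; ring
  _ ≤ Real.exp (𝔼 a, X a ^ 2) := Real.add_one_le_exp _

theorem expect_sq_sub_expect_le (g : ι → ℝ) (c : ℝ) :
    𝔼 a, (g a - 𝔼 b, g b) ^ 2 ≤ 𝔼 a, (g a - c) ^ 2 := by
  set G := 𝔼 b, g b
  have hcentered : 𝔼 a, (G - c) * (g a - G) = 0 := by
    rw [← mul_expect, expect_sub_distrib, Fintype.expect_const, sub_self, mul_zero]
  have hsplit : 𝔼 a, (g a - c) ^ 2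
      = 𝔼 a, (g a - G) ^ 2 + 2 * 𝔼 a, (G - c) * (g a - G) + (G - c) ^ 2 := by
    rw [mul_expect, ← expect_add_distrib, ← Fintype.expect_const (ι := ι) ((G - c) ^ 2),
      ← expect_add_distrib]
    exact expect_congr rfl fun a _ => by ring
  nlinarith [sq_nonneg (G - c)]

theorem expect_exp_le_of_abs_sub_le {g : ι → ℝ} {g₀ R θ : ℝ} (hg : ∀ a, |g a - g₀| ≤ R)
    (hθ : 0 ≤ θ) (hθR : θ * (2 * R) ≤ 1) :
    𝔼 a, Real.exp (θ * g a) ≤ Real.exp (θ * 𝔼 a, g a + θ ^ 2 * 𝔼 a, (g a - g₀) ^ 2) := by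
  set G := 𝔼 a, g a
  have hGg₀ : |G - g₀| ≤ R := by
    calc |G - g₀| = |𝔼 a, (g a - g₀)| := by rw [expect_sub_distrib, Fintype.expect_const]
      _ ≤ 𝔼 a, |g a - g₀| := abs_expect_le _ _
      _ ≤ R := expect_le univ_nonempty fun a _ => hg a
  have hX1 : ∀ a, |θ * (g a - G)| ≤ 1 := fun a => by
    calc |θ * (g a - G)| = θ * |(g a - g₀) - (G - g₀)| := by
          rw [abs_mul, abs_of_nonneg hθ, sub_sub_sub_cancel_right]
      _ ≤ θ * (2 * R) := by
          gcongr
          linarith [abs_sub (g a - g₀) (G - g₀), hg a]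
      _ ≤ 1 := hθR
  have hX : 𝔼 a, θ * (g a - G) = 0 := by
    rw [← mul_expect, expect_sub_distrib, Fintype.expect_const, sub_self, mul_zero]
  calc 𝔼 a, Real.exp (θ * g a) = Real.exp (θ * G) * 𝔼 a, Real.exp (θ * (g a - G)) := by
        rw [mul_expect]
        refine expect_congr rfl fun a _ => ?_
        rw [← Real.exp_add]; ring_nf
    _ ≤ Real.exp (θ * G) * Real.exp (𝔼 a, (θ * (g a - G)) ^ 2) := by
        gcongr; exact expect_exp_le_exp_expect_sq hX hX1
    _ ≤ Real.exp (θ * G + θ ^ 2 * 𝔼 a, (g a - g₀) ^ 2) := by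
        rw [← Real.exp_add]
        simp_rw [mul_pow, ← mul_expect]
        have := expect_sq_sub_expect_le g g₀
        gcongr

end Expectation

theorem card_filter_le_div_card_le_expect_exp {ι : Type*} [Fintype ι] (f : ι → ℝ) (a : ℝ)
    {θ : ℝ} (hθ : 0 ≤ θ) [DecidablePred fun x => a ≤ f x] :
    (#{x | a ≤ f x} : ℝ) / Fintype.card ι ≤ 𝔼 x, Real.exp (θ * (f x - a)) := by
  rw [card_filter, Nat.cast_sum, ← Fintype.expect_eq_sum_div_card]
  refine expect_le_expect fun x _ => ?_
  split_ifs with hx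
  · exact_mod_cast Real.one_le_exp (mul_nonneg hθ (sub_nonneg.2 hx))
  · exact_mod_cast (Real.exp_pos _).le

theorem one_sub_le_ncard_div_card {ι : Type*} [Fintype ι] [Nonempty ι] {P Q : ι → Prop}
    [DecidablePred Q] {δ : ℝ} (hPQ : ∀ x, ¬ Q x → P x)
    (hQ : (#{x | Q x} : ℝ) / Fintype.card ι ≤ δ) :
    1 - δ ≤ ({x | P x}.ncard : ℝ) / Fintype.card ι := by
  have hcard : (0 : ℝ) < Fintype.card ι := by exact_mod_cast Fintype.card_pos
  have hnotQ : #{x | ¬ Q x} ≤ {x | P x}.ncard := by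
    rw [← Set.ncard_coe_finset]
    exact Set.ncard_le_ncard (fun x hx => hPQ x (by simpa using hx))
  have hsplit : #{x | Q x} + #{x | ¬ Q x} = Fintype.card ι :=
    card_filter_add_card_filter_not _
  rw [div_le_iff₀ hcard] at hQ
  rw [le_div_iff₀ hcard]
  have : (#{x | Q x} : ℝ) + #{x | ¬ Q x} = Fintype.card ι := by exact_mod_cast hsplit
  have : (#{x | ¬ Q x} : ℝ) ≤ {x | P x}.ncard := by exact_mod_cast hnotQ
  linarith

section RandomWalk

variable {α E : Type*} [Fintype α] [NormedAddCommGroup E] (v : α → E)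

theorem expect_fin_succ_add_sum {m : ℕ} (F : E → ℝ) (s : E) :
    𝔼 ω : Fin (m + 1) → α, F (s + ∑ k, v (ω k))
      = 𝔼 a, 𝔼 ω : Fin m → α, F (s + v a + ∑ k, v (ω k)) := by
  rw [expect_fun_fin_succ]
  simp only [Fin.sum_univ_succ, Fin.cons_zero, Fin.cons_succ, add_assoc]

/-- After `k` of `m` samples with partial sum `s`, `expectNormAddSum v (m - k) s` is the Doob
martingale of the norm of the full sum. -/
noncomputable def expectNormAddSum (m : ℕ) (s : E) : ℝ :=
  𝔼 ω : Fin m → α, ‖s + ∑ k, v (ω k)‖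

theorem expectNormAddSum_succ (m : ℕ) (s : E) :
    expectNormAddSum v (m + 1) s = 𝔼 a, expectNormAddSum v m (s + v a) :=
  expect_fin_succ_add_sum v _ s

variable [Nonempty α]

theorem abs_expectNormAddSum_sub_le (m : ℕ) (x y : E) :
    |expectNormAddSum v m x - expectNormAddSum v m y| ≤ ‖x - y‖ := calc
  _ = |𝔼 ω : Fin m → α, (‖x + ∑ k, v (ω k)‖ - ‖y + ∑ k, v (ω k)‖)| := by
    rw [expectNormAddSum, expectNormAddSum, expect_sub_distrib]
  _ ≤ 𝔼 ω : Fin m → α, |‖x + ∑ k, v (ω k)‖ - ‖y + ∑ k, v (ω k)‖| := abs_expect_le _ _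
  _ ≤ ‖x - y‖ := expect_le univ_nonempty fun ω _ => by
    simpa using abs_norm_sub_norm_le (x + ∑ k, v (ω k)) (y + ∑ k, v (ω k))

theorem expect_exp_mul_norm_add_sum_le {R θ : ℝ} (hR : ∀ a, ‖v a‖ ≤ R) (hθ : 0 ≤ θ)
    (hθR : θ * (2 * R) ≤ 1) (m : ℕ) (s : E) :
    𝔼 ω : Fin m → α, Real.exp (θ * ‖s + ∑ k, v (ω k)‖)
      ≤ Real.exp (θ * expectNormAddSum v m s + θ ^ 2 * (m * 𝔼 a, ‖v a‖ ^ 2)) := by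
  induction m generalizing s with
  | zero => simp [expectNormAddSum]
  | succ m ih =>
    set W := 𝔼 a, ‖v a‖ ^ 2
    have hincr : ∀ a, |expectNormAddSum v m (s + v a) - expectNormAddSum v m s| ≤ ‖v a‖ :=
      fun a => by simpa using abs_expectNormAddSum_sub_le v m (s + v a) s
    have hvar : 𝔼 a, (expectNormAddSum v m (s + v a) - expectNormAddSum v m s) ^ 2 ≤ W :=
      expect_le_expect fun a _ => by
        rw [← sq_abs]; exact pow_le_pow_left₀ (abs_nonneg _) (hincr a) 2
    clear_value W
    calc 𝔼 ω : Fin (m + 1) → α, Real.exp (θ * ‖s + ∑ k, v (ω k)‖)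
        = 𝔼 a, 𝔼 ω : Fin m → α, Real.exp (θ * ‖s + v a + ∑ k, v (ω k)‖) :=
          expect_fin_succ_add_sum v (fun x => Real.exp (θ * ‖x‖)) s
      _ ≤ 𝔼 a, Real.exp (θ * expectNormAddSum v m (s + v a) + θ ^ 2 * (m * W)) :=
          expect_le_expect fun a _ => ih (s + v a)
      _ = Real.exp (θ ^ 2 * (m * W)) * 𝔼 a, Real.exp (θ * expectNormAddSum v m (s + v a)) := by
          rw [mul_expect]
          exact expect_congr rfl fun a _ => by rw [← Real.exp_add, add_comm]
      _ ≤ Real.exp (θ ^ 2 * (m * W)) * Real.exp (θ * expectNormAddSum v (m + 1) s + θ ^ 2 * W) := by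
          rw [expectNormAddSum_succ]
          gcongr
          refine (expect_exp_le_of_abs_sub_le (fun a => (hincr a).trans (hR a)) hθ hθR).trans ?_
          gcongr
      _ = Real.exp (θ * expectNormAddSum v (m + 1) s + θ ^ 2 * ((m + 1 : ℕ) * W)) := by
          rw [← Real.exp_add]; push_cast; ring_nf

section InnerProduct

variable {𝕜 : Type*} [RCLike 𝕜] [InnerProductSpace 𝕜 E]

include 𝕜 in
theorem expect_norm_add_sq (hv : ∑ a, v a = 0) (s : E) :
    𝔼 a, ‖s + v a‖ ^ 2 = ‖s‖ ^ 2 + 𝔼 a, ‖v a‖ ^ 2 := by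
  have hcross : 𝔼 a, RCLike.re (inner 𝕜 s (v a)) = 0 := by
    rw [Fintype.expect_eq_sum_div_card, ← map_sum, ← inner_sum, hv, inner_zero_right, map_zero,
      zero_div]
  simp_rw [norm_add_sq (𝕜 := 𝕜), expect_add_distrib, ← mul_expect, hcross, Fintype.expect_const]
  ring

include 𝕜 in
theorem expect_norm_add_sum_sq (hv : ∑ a, v a = 0) (m : ℕ) (s : E) :
    𝔼 ω : Fin m → α, ‖s + ∑ k, v (ω k)‖ ^ 2 = ‖s‖ ^ 2 + m * 𝔼 a, ‖v a‖ ^ 2 := by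
  induction m generalizing s with
  | zero => simp
  | succ m ih =>
    rw [expect_fin_succ_add_sum v (fun x => ‖x‖ ^ 2), expect_congr rfl fun a _ => ih (s + v a),
      expect_add_distrib, expect_norm_add_sq (𝕜 := 𝕜) v hv, Fintype.expect_const]
    push_cast; ring

include 𝕜 in
theorem expectNormAddSum_zero_le (hv : ∑ a, v a = 0) (m : ℕ) :
    expectNormAddSum v m 0 ≤ √(m * 𝔼 a, ‖v a‖ ^ 2) := by
  refine Real.le_sqrt_of_sq_le ?_
  have hCS := expect_mul_sq_le_sq_mul_sq univ (fun ω : Fin m → α => ‖(0 : E) + ∑ k, v (ω k)‖)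
    fun _ => 1
  simp only [mul_one, one_pow, Fintype.expect_const] at hCS
  rwa [expect_norm_add_sum_sq (𝕜 := 𝕜) v hv, norm_zero, zero_pow two_ne_zero, zero_add] at hCS

include 𝕜 in
theorem card_le_norm_sum_div_card_le_exp (hv : ∑ a, v a = 0) {R σ t : ℝ} (hR : ∀ a, ‖v a‖ ≤ R)
    {m : ℕ} (hW : m * 𝔼 a, ‖v a‖ ^ 2 ≤ σ ^ 2) (hσ : 0 < σ) (ht : 0 ≤ t) (htR : t * R ≤ σ ^ 2) :
    (#{ω : Fin m → α | σ + t ≤ ‖∑ k, v (ω k)‖} : ℝ) / Fintype.card (Fin m → α)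
      ≤ Real.exp (-(t ^ 2 / (4 * σ ^ 2))) := by
  -- `θ` minimises `-θ t + θ² σ²`.
  set θ := t / (2 * σ ^ 2)
  have hθ : 0 ≤ θ := by positivity
  have hθR : θ * (2 * R) ≤ 1 := by
    rw [div_mul_eq_mul_div, div_le_one (by positivity)]; linarith
  have hmgf := expect_exp_mul_norm_add_sum_le v hR hθ hθR m 0
  have hmean := (expectNormAddSum_zero_le (𝕜 := 𝕜) v hv m).trans ((Real.sqrt_le_left hσ.le).2 hW)
  simp only [zero_add] at hmgf
  calc (#{ω : Fin m → α | σ + t ≤ ‖∑ k, v (ω k)‖} : ℝ) / Fintype.card (Fin m → α)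
      ≤ 𝔼 ω : Fin m → α, Real.exp (θ * (‖∑ k, v (ω k)‖ - (σ + t))) :=
        card_filter_le_div_card_le_expect_exp _ _ hθ
    _ = Real.exp (-(θ * (σ + t))) * 𝔼 ω : Fin m → α, Real.exp (θ * ‖∑ k, v (ω k)‖) := by
        rw [mul_expect]
        exact expect_congr rfl fun ω _ => by rw [← Real.exp_add]; ring_nf
    _ ≤ Real.exp (-(θ * (σ + t))) *
          Real.exp (θ * expectNormAddSum v m 0 + θ ^ 2 * (m * 𝔼 a, ‖v a‖ ^ 2)) := by
        gcongr
    _ ≤ Real.exp (-(θ * (σ + t))) * Real.exp (θ * σ + θ ^ 2 * σ ^ 2) := by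
        gcongr
    _ = Real.exp (-(t ^ 2 / (4 * σ ^ 2))) := by
        rw [← Real.exp_add]; congr 1; simp only [θ]; field_simp; ring

include 𝕜 in
theorem card_sq_lt_norm_sum_sq_div_card_le_exp (hv : ∑ a, v a = 0) {R V L : ℝ}
    (hR : ∀ a, ‖v a‖ ≤ R) (hV : 𝔼 a, ‖v a‖ ^ 2 ≤ V) {m : ℕ} (hmV : 0 < m * V) (hL : 0 ≤ L)
    (hsize : 4 * L * R ^ 2 ≤ m * V) :
    (#{ω : Fin m → α | (1 + 2 * √L) ^ 2 * (m * V) < ‖∑ k, v (ω k)‖ ^ 2} : ℝ)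
        / Fintype.card (Fin m → α) ≤ Real.exp (-L) := by
  set σ := √(m * V)
  have hσ : 0 < σ := Real.sqrt_pos.2 hmV
  have hσ2 : σ ^ 2 = m * V := Real.sq_sqrt hmV.le
  have hR0 : 0 ≤ R := (norm_nonneg _).trans (hR (Classical.arbitrary α))
  have htR : 2 * √L * σ * R ≤ σ ^ 2 := by
    refine (pow_le_pow_iff_left₀ (by positivity) (by positivity) two_ne_zero).1 ?_
    calc (2 * √L * σ * R) ^ 2 = σ ^ 2 * (4 * L * R ^ 2) := by
          rw [mul_pow, mul_pow, mul_pow, Real.sq_sqrt hL]; ring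
      _ ≤ (σ ^ 2) ^ 2 := by rw [sq (σ ^ 2)]; gcongr; rwa [hσ2]
  have hevent : ∀ ω : Fin m → α, (1 + 2 * √L) ^ 2 * (m * V) < ‖∑ k, v (ω k)‖ ^ 2 →
      σ + 2 * √L * σ ≤ ‖∑ k, v (ω k)‖ := fun ω h => by
    rw [← hσ2, ← mul_pow] at h
    linarith [(pow_lt_pow_iff_left₀ (by positivity) (norm_nonneg _) two_ne_zero).1 h]
  calc _ ≤ (#{ω : Fin m → α | σ + 2 * √L * σ ≤ ‖∑ k, v (ω k)‖} : ℝ)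
        / Fintype.card (Fin m → α) := by
        gcongr
        exact hevent _
    _ ≤ Real.exp (-((2 * √L * σ) ^ 2 / (4 * σ ^ 2))) :=
        card_le_norm_sum_div_card_le_exp (𝕜 := 𝕜) v hv hR (by rw [hσ2]; gcongr) hσ
          (by positivity) htR
    _ = Real.exp (-L) := by
        rw [mul_pow, mul_pow, Real.sq_sqrt hL]; field_simp; ring_nf

end InnerProduct

end RandomWalk

theorem Matrix.sum_norm_mulVec_sq_le {l n 𝕜 : Type*} [Fintype l] [Fintype n] [SeminormedRing 𝕜]
    (M : Matrix l n 𝕜) (x : n → 𝕜) :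
    ∑ i, ‖(M *ᵥ x) i‖ ^ 2 ≤ (∑ i, ∑ j, ‖M i j‖ ^ 2) * ∑ j, ‖x j‖ ^ 2 := by
  rw [sum_mul]
  refine sum_le_sum fun i _ => ?_
  calc ‖(M *ᵥ x) i‖ ^ 2 ≤ (∑ j, ‖M i j‖ * ‖x j‖) ^ 2 := by
        gcongr
        exact (norm_sum_le _ _).trans (sum_le_sum fun j _ => norm_mul_le _ _)
    _ ≤ (∑ j, ‖M i j‖ ^ 2) * ∑ j, ‖x j‖ ^ 2 := sum_mul_sq_le_sq_mul_sq _ _ _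

theorem Matrix.norm_toLp_conjTranspose_mulVec_sq_le {l n 𝕜 : Type*} [Fintype l] [Fintype n]
    [RCLike 𝕜] (M : Matrix l n 𝕜) (x : l → 𝕜) :
    ‖WithLp.toLp 2 (Mᴴ *ᵥ x)‖ ^ 2 ≤ (∑ i, ∑ j, ‖M i j‖ ^ 2) * ∑ i, ‖x i‖ ^ 2 := by
  rw [EuclideanSpace.norm_sq_eq, sum_comm (γ := l)]
  simpa [conjTranspose_apply] using sum_norm_mulVec_sq_le Mᴴ x

/-- Sampling with replacement is modelled by the uniform distribution on `Fin m → Fin n₁`: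
probabilities are `#event / n₁ ^ m`. -/
theorem tubal_sampling_cross_term_bound_general
    (n₁ n₂ n₃ m : ℕ) (hn₁ : 0 < n₁) (hn₂ : 0 < n₂) (hm : 0 < m)
    (c μ δ : ℝ) (hc : 0 < c) (hμ : 1 ≤ μ) (hδ : 0 < δ)
    (A : Fin n₁ → Matrix (Fin n₃) (Fin (n₂ * n₃)) ℂ)
    (hAF : ∀ j, ∑ i, ∑ l, ‖A j i l‖ ^ 2 ≤ c ^ 2 * n₂ * μ / n₁)
    (b : Fin n₁ → Fin n₃ → ℂ)
    (hb : ∃ j, b j ≠ 0)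
    (horth : ∑ j, (A j)ᴴ *ᵥ b j = 0)
    (B Bmax : ℝ)
    (hB : B = ∑ j, ∑ i, ‖b j i‖ ^ 2)
    (hBmax : IsGreatest (Set.range fun j => ∑ i, ‖b j i‖ ^ 2) Bmax)
    (hsize : 4 * (n₁ * Bmax / B) * Real.log (1 / δ) ≤ m)
    (β : ℝ)
    (hβ : β = (1 + 2 * Real.sqrt (Real.log (1 / δ))) ^ 2) :
    1 - δ ≤
      (Set.ncard {ω : Fin m → Fin n₁ |
        ∑ l, ‖(∑ k, (A (ω k))ᴴ *ᵥ b (ω k)) l‖ ^ 2 ≤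
          β * (m * c ^ 2 * n₂ * μ / (n₁ : ℝ) ^ 2) * B} : ℝ) / (n₁ : ℝ) ^ m := by
  rcases le_or_gt 1 δ with hδ1 | hδ1
  · exact (sub_nonpos.2 hδ1).trans (by positivity)
  have : Nonempty (Fin n₁) := Fin.pos_iff_nonempty.mp hn₁
  set L := Real.log (1 / δ)
  set K := c ^ 2 * n₂ * μ / n₁
  let v : Fin n₁ → EuclideanSpace ℂ (Fin (n₂ * n₃)) := fun j => WithLp.toLp 2 ((A j)ᴴ *ᵥ b j)
  have hv : ∀ j, ‖v j‖ ^ 2 ≤ K * ∑ i, ‖b j i‖ ^ 2 := fun j =>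
    (norm_toLp_conjTranspose_mulVec_sq_le (A j) (b j)).trans (by gcongr; exact hAF j)
  have hb_nonneg : ∀ j, 0 ≤ ∑ i, ‖b j i‖ ^ 2 := fun j => sum_nonneg fun i _ => sq_nonneg _
  have hB0 : 0 < B := by
    obtain ⟨j, i, hi⟩ : ∃ j i, b j i ≠ 0 := by simpa [funext_iff] using hb
    rw [hB]
    exact sum_pos' (fun j _ => hb_nonneg j) ⟨j, mem_univ j,
      sum_pos' (fun i _ => sq_nonneg _) ⟨i, mem_univ i, pow_pos (norm_pos_iff.2 hi) 2⟩⟩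
  have hK : 0 < K := by have := zero_lt_one.trans_le hμ; positivity
  have hR : ∀ j, ‖v j‖ ≤ √(K * Bmax) := fun j =>
    Real.le_sqrt_of_sq_le ((hv j).trans (by gcongr; exact hBmax.2 ⟨j, rfl⟩))
  have hV : 𝔼 j, ‖v j‖ ^ 2 ≤ K * B / n₁ := calc
    𝔼 j, ‖v j‖ ^ 2 ≤ 𝔼 j, K * ∑ i, ‖b j i‖ ^ 2 := expect_le_expect fun j _ => hv j
    _ = K * B / n₁ := by
      rw [← mul_expect, Fintype.expect_eq_sum_div_card, Fintype.card_fin, hB]; ring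
  have hsize' : 4 * L * √(K * Bmax) ^ 2 ≤ m * (K * B / n₁) := calc
    4 * L * √(K * Bmax) ^ 2 = 4 * (n₁ * Bmax / B) * L * (K * B / n₁) := by
      rw [Real.sq_sqrt (by obtain ⟨j, hj⟩ := hBmax.1; exact hj ▸ by positivity)]; field_simp
    _ ≤ m * (K * B / n₁) := by gcongr
  have htail := card_sq_lt_norm_sum_sq_div_card_le_exp (𝕜 := ℂ) v
    (by rw [← WithLp.toLp_sum, horth]; rfl) hR hV (by positivity)
    (Real.log_nonneg (one_le_one_div hδ hδ1.le)) hsize'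
  rw [Real.exp_neg, Real.exp_log (by positivity), inv_div, div_one] at htail
  rw [show (n₁ : ℝ) ^ m = Fintype.card (Fin m → Fin n₁) by simp]
  refine one_sub_le_ncard_div_card (fun ω hω => ?_) htail
  rw [EuclideanSpace.norm_sq_eq, ← WithLp.toLp_sum, not_lt] at hω
  exact hω.trans_eq (by rw [hβ]; simp only [K]; ring)

/-- **Lemma 2 (tubal-sampling cross-term bound).**
Sampling with replacement is modeled by the uniform distribution on the finite
sample space `Fin m → Fin n₁`, probabilities being `#(event) / n₁ ^ m`. -/
theorem tubal_sampling_cross_term_bound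
    (n₁ n₂ n₃ m : ℕ) (hn₁ : 0 < n₁) (hn₂ : 0 < n₂) (hn₃ : 0 < n₃) (hm : 0 < m)
    (c μ δ : ℝ) (hc : 0 < c) (hμ : 1 ≤ μ) (hδ : 0 < δ)
    (A : Fin n₁ → Matrix (Fin n₃) (Fin (n₂ * n₃)) ℂ)
    (hA : ∑ j, (A j)ᴴ * A j = 1)
    (hAF : ∀ j, ∑ i, ∑ l, ‖A j i l‖ ^ 2 ≤ c ^ 2 * n₂ * μ / n₁)
    (b : Fin n₁ → Fin n₃ → ℂ)
    (hb : ∃ j, b j ≠ 0)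
    (horth : ∑ j, (A j)ᴴ *ᵥ b j = 0)
    (B Bmax : ℝ)
    (hB : B = ∑ j, ∑ i, ‖b j i‖ ^ 2)
    (hBmax : IsGreatest (Set.range fun j => ∑ i, ‖b j i‖ ^ 2) Bmax)
    (hsize : 4 * (n₁ * Bmax / B) * Real.log (1 / δ) ≤ m)
    (β : ℝ)
    (hβ : β = (1 + 2 * Real.sqrt (Real.log (1 / δ))) ^ 2) :
    1 - δ ≤
      (Set.ncard {ω : Fin m → Fin n₁ |
        ∑ l, ‖(∑ k, (A (ω k))ᴴ *ᵥ b (ω k)) l‖ ^ 2 ≤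
          β * (m * c ^ 2 * n₂ * μ / (n₁ : ℝ) ^ 2) * B} : ℝ) / (n₁ : ℝ) ^ m :=
  tubal_sampling_cross_term_bound_general n₁ n₂ n₃ m hn₁ hn₂ hm c μ δ hc hμ hδ A hAF b hb horth B
    Bmax hB hBmax hsize β hβ
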